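/- Let $q > 0$, $q \neq 1$, and let $l$ be a nonnegative integer. With $A, B$ the operators of the representation $T_l$ of $\mathrm{so}_q'(3)$ defined by $A|m\rangle = i[m]_q|m\rangle$ and $B|m\rangle = d(m)([l-m]_q[l+m+1]_q)^{1/2}|m+1\rangle - d(m-1)([l+m]_q[l-m+1]_q)^{1/2}|m-1\rangle$ on the $(2l+1)$-dimensional space with basis $|m\rangle$, $-l \le m \le l$, the relation $A^2 B - (q^{1/2}+q^{-1/2}) A B A + B A^2 = -B$ holds. -/
import Mathlib


noncomputable def qnum (q b : ℝ) : ℝ :=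
  (q ^ (b / 2) - q ^ (-b / 2)) / (q ^ ((1 : ℝ) / 2) - q ^ (-(1 : ℝ) / 2))

noncomputable def dcoef (q m : ℝ) : ℝ :=
  Real.sqrt (qnum q m * qnum q (m + 1) / (qnum q (2 * m) * qnum q (2 * m + 2)))

noncomputable def cplus (q : ℝ) (l : ℕ) (m : ℝ) : ℝ :=
  dcoef q m * Real.sqrt (qnum q ((l : ℝ) - m) * qnum q ((l : ℝ) + m + 1))

noncomputable def cminus (q : ℝ) (l : ℕ) (m : ℝ) : ℝ :=
  dcoef q (m - 1) * Real.sqrt (qnum q ((l : ℝ) + m) * qnum q ((l : ℝ) - m + 1))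

noncomputable def mval (l : ℕ) (i : Fin (2 * l + 1)) : ℝ := ((i : ℕ) : ℝ) - (l : ℝ)

noncomputable def Aop (q : ℝ) (l : ℕ) : Matrix (Fin (2 * l + 1)) (Fin (2 * l + 1)) ℂ :=
  Matrix.diagonal fun i => Complex.I * ((qnum q (mval l i) : ℝ) : ℂ)

noncomputable def Bop (q : ℝ) (l : ℕ) : Matrix (Fin (2 * l + 1)) (Fin (2 * l + 1)) ℂ :=
  Matrix.of fun i j =>
    if (i : ℕ) = (j : ℕ) + 1 then ((cplus q l (mval l j) : ℝ) : ℂ)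
    else if (i : ℕ) + 1 = (j : ℕ) then -((cminus q l (mval l j) : ℝ) : ℂ)
    else 0

lemma key (q : ℝ) (hq : 0 < q) (hq1 : q ≠ 1) (m : ℝ) :
    qnum q (m+1)^2 - (q ^ ((1:ℝ)/2) + q ^ (-(1:ℝ)/2)) * (qnum q (m+1) * qnum q m)
      + qnum q m ^ 2 = 1 := by
  have hs : (0:ℝ) < q ^ ((1:ℝ)/2) := Real.rpow_pos_of_pos hq _
  have hx : (0:ℝ) < q ^ (m/2) := Real.rpow_pos_of_pos hq _
  have hsne : q ^ ((1:ℝ)/2) ≠ 1 := by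
    intro h
    apply hq1
    have h2 : (q ^ ((1:ℝ)/2)) ^ (2:ℕ) = q := by
      rw [← Real.rpow_natCast (q ^ ((1:ℝ)/2)) 2, ← Real.rpow_mul hq.le]
      norm_num
    rw [h] at h2; simpa using h2.symm
  have hden : q ^ ((1:ℝ)/2) - (q ^ ((1:ℝ)/2))⁻¹ ≠ 0 := by
    rw [sub_ne_zero]
    intro h
    apply hsne
    have h2 : (q ^ ((1:ℝ)/2))^2 = 1 := by
      field_simp at h
      nlinarith [h]
    nlinarith [hs, sq_nonneg (q ^ ((1:ℝ)/2) - 1), sq_nonneg (q ^ ((1:ℝ)/2) + 1)]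
  have eneg : ∀ b : ℝ, q ^ (-b/2) = (q ^ (b/2))⁻¹ := by
    intro b
    rw [neg_div, Real.rpow_neg hq.le]
  have e1 : q ^ ((m+1)/2) = q ^ (m/2) * q ^ ((1:ℝ)/2) := by
    rw [← Real.rpow_add hq]; ring_nf
  simp only [qnum, eneg, e1]
  set s := q ^ ((1:ℝ)/2) with hsdef
  set x := q ^ (m/2) with hxdef
  obtain ⟨d, hd⟩ : ∃ d : ℝ, d = s - s⁻¹ := ⟨_, rfl⟩
  rw [← hd] at hden ⊢
  have H : ((x*s - (x*s)⁻¹)^2 - (s+s⁻¹)*((x*s-(x*s)⁻¹)*(x-x⁻¹)) + (x-x⁻¹)^2)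
      = d^2 := by
    rw [hd]
    field_simp [hx.ne', hs.ne']
    ring
  trans (((x*s - (x*s)⁻¹)^2 - (s+s⁻¹)*((x*s-(x*s)⁻¹)*(x-x⁻¹)) + (x-x⁻¹)^2)/d^2)
  · ring
  · rw [H, div_self (pow_ne_zero 2 hden)]

theorem relation_AAB (q : ℝ) (hq : 0 < q) (hq1 : q ≠ 1) (l : ℕ) :
    Aop q l * Aop q l * Bop q l -
        (((q ^ ((1 : ℝ) / 2) + q ^ (-(1 : ℝ) / 2) : ℝ) : ℂ)) •
          (Aop q l * Bop q l * Aop q l) +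
        Bop q l * Aop q l * Aop q l = -Bop q l := by
  have hkey := key q hq hq1
  ext i j
  simp only [Aop, Bop, Matrix.sub_apply, Matrix.add_apply, Matrix.smul_apply, Matrix.neg_apply,
    Matrix.diagonal_mul_diagonal, Matrix.diagonal_mul, Matrix.mul_diagonal, smul_eq_mul,
    Matrix.of_apply]
  split_ifs with h1 h2
  · have hm : mval l i = mval l j + 1 := by
      simp only [mval, h1]; push_cast; ring
    rw [hm]
    have hk := hkey (mval l j)
    have hkC : ((qnum q (mval l j + 1) : ℝ) : ℂ)^2
        - ((q ^ ((1:ℝ)/2) + q ^ (-(1:ℝ)/2) : ℝ) : ℂ) *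
          (((qnum q (mval l j + 1) : ℝ) : ℂ) * ((qnum q (mval l j) : ℝ) : ℂ))
        + ((qnum q (mval l j) : ℝ) : ℂ)^2 = 1 := by
      exact_mod_cast hk
    linear_combination (((cplus q l (mval l j) : ℝ) : ℂ) * Complex.I^2) * hkC
      + ((cplus q l (mval l j) : ℝ) : ℂ) * Complex.I_sq
  · have hm : mval l j = mval l i + 1 := by
      simp only [mval, ← h2]; push_cast; ring
    rw [hm]
    have hk := hkey (mval l i)
    have hkC : ((qnum q (mval l i + 1) : ℝ) : ℂ)^2
        - ((q ^ ((1:ℝ)/2) + q ^ (-(1:ℝ)/2) : ℝ) : ℂ) *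
          (((qnum q (mval l i + 1) : ℝ) : ℂ) * ((qnum q (mval l i) : ℝ) : ℂ))
        + ((qnum q (mval l i) : ℝ) : ℂ)^2 = 1 := by
      exact_mod_cast hk
    linear_combination (-((cminus q l (mval l i + 1) : ℝ) : ℂ) * Complex.I^2) * hkC
      + (-((cminus q l (mval l i + 1) : ℝ) : ℂ)) * Complex.I_sq
  · ring
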